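/- Let r > 0, n ∈ ℕ, let φ : [−r,0] → ℝⁿ be continuous, x ∈ ℝⁿ, and let φ̂ˣ denote the extension of φ by the constant x on nonnegative times. Then the right derivative at t = 0 of the map t ↦ ‖(φ̂ˣ)_t‖²_V exists and equals |x|² − |φ(−r)|²; that is, lim_{t→0⁺} ( ‖(φ̂ˣ)_t‖²_V − ‖φ‖²_V ) / t = |x|² − |φ(−r)|². -/

import Mathlib

open MeasureTheory Set Filter Topology intervalIntegral
open scoped Interval

/-! For `0 < t < r` the segment `(φ̂ˣ)_t` is `φ(t + ·)` on `[-r, -t)` and `x` on `[-t, 0]`, so after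
the change of variables `q = t + p` the difference of squared norms is
`t‖x‖² - ∫_{-r}^{-r+t} ‖φ‖²`. Divided by `t`, the second term is an average of the continuous
function `‖φ‖²` over `[-r, -r + t]`, which tends to `‖φ(-r)‖²` by the fundamental theorem of
calculus. -/

section

variable {E : Type*} [NormedAddCommGroup E] [NormedSpace ℝ E] [CompleteSpace E]

theorem integral_shift_ite_sub_integral {g : ℝ → E} {a b t : ℝ} (ht : 0 ≤ t) (htab : a + t ≤ b)
    (hg : IntervalIntegrable g volume a b) (c : E) :
    (∫ p in a..b, if b ≤ t + p then c else g (t + p)) - ∫ p in a..b, g p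
      = t • c - ∫ p in a..a + t, g p := by
  set f : ℝ → E := fun p => if b ≤ t + p then c else g (t + p)
  have hf_left : EqOn f (fun p => g (t + p)) (Ioo a (b - t)) :=
    fun p hp => if_neg (by linarith [hp.2])
  have hf_right : EqOn f (fun _ => c) [[b - t, b]] := fun p hp => by
    rw [uIcc_of_le (by linarith)] at hp
    exact if_pos (by linarith [hp.1])
  have hmid : a + t ∈ [[a, b]] := Icc_subset_uIcc ⟨by linarith, htab⟩
  have hg_left : IntervalIntegrable g volume a (a + t) :=
    hg.mono_set (uIcc_subset_uIcc left_mem_uIcc hmid)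
  have hg_right : IntervalIntegrable g volume (a + t) b :=
    hg.mono_set (uIcc_subset_uIcc hmid right_mem_uIcc)
  have hg_shift : IntervalIntegrable (fun p => g (t + p)) volume a (b - t) := by
    simpa using hg_right.comp_add_left t
  have hf_int_left : IntervalIntegrable f volume a (b - t) :=
    hg_shift.congr_uIoo (by rw [uIoo_of_le (by linarith)]; exact hf_left.symm)
  have hf_int_right : IntervalIntegrable f volume (b - t) b :=
    (intervalIntegrable_const (c := c)).congr (hf_right.symm.mono Ioc_subset_Icc_self)
  rw [← integral_add_adjacent_intervals hf_int_left hf_int_right,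
    ← integral_add_adjacent_intervals hg_left hg_right,
    integral_congr_Ioo_of_le (by linarith) hf_left, integral_congr hf_right,
    integral_comp_add_left, intervalIntegral.integral_const]
  simp only [add_comm t a, add_sub_cancel, sub_sub_cancel]
  abel

theorem tendsto_inv_smul_integral_nhdsGT {g : ℝ → E} {a b : ℝ} (hab : a < b)
    (hg : ContinuousOn g (Icc a b)) :
    Tendsto (fun t => t⁻¹ • ∫ p in a..a + t, g p) (𝓝[>] 0) (𝓝 (g a)) := by
  have hIcc : Icc a b ∈ 𝓝[>] a := Icc_mem_nhdsGT hab
  have hFTC : HasDerivWithinAt (fun u => ∫ p in a..u, g p) (g a) (Ici a) a :=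
    integral_hasDerivWithinAt_right IntervalIntegrable.refl
      (hg.stronglyMeasurableAtFilter_nhdsWithin measurableSet_Icc a
        |>.filter_mono (nhdsWithin_le_of_mem hIcc))
      ((hg a (left_mem_Icc.2 hab.le)).mono_of_mem_nhdsWithin hIcc)
  have hshift : HasDerivWithinAt (fun t => ∫ p in a..a + t, g p) (g a) (Ioi 0) 0 := by
    have hFTC' : HasDerivWithinAt (fun u => ∫ p in a..u, g p) (g a) (Ici a) (a + 0) := by
      rwa [add_zero]
    simpa only [Function.comp_def, one_smul] using
      hFTC'.scomp 0 ((hasDerivAt_id' 0).const_add a).hasDerivWithinAt (s := Ioi 0)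
        fun t ht => show a ≤ a + t by linarith [mem_Ioi.1 ht]
  rw [hasDerivWithinAt_iff_tendsto_slope' self_notMem_Ioi] at hshift
  simpa [slope_fun_def] using hshift

end

/-- For a continuous `φ : [-r,0] → ℝⁿ` and `x ∈ ℝⁿ`, let `φ̂ˣ` be the extension of `φ`
by the constant `x` on nonnegative times. The right derivative at `t = 0` of
`t ↦ ‖(φ̂ˣ)_t‖²_V` exists and equals `|x|² − |φ(−r)|²`:
`lim_{t→0⁺} (‖(φ̂ˣ)_t‖²_V − ‖φ‖²_V)/t = |x|² − |φ(−r)|²`, where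
`‖ψ‖²_V = ∫_{-r}^0 |ψ(p)|² dp`. -/
theorem segment_norm_sq_right_derivative
    (r : ℝ) (hr : 0 < r) (n : ℕ)
    (φ : ℝ → EuclideanSpace ℝ (Fin n)) (hφ : ContinuousOn φ (Icc (-r) 0))
    (x : EuclideanSpace ℝ (Fin n)) :
    Tendsto
      (fun t =>
        ((∫ p in Icc (-r) (0 : ℝ), ‖(if 0 ≤ t + p then x else φ (t + p))‖ ^ 2)
          - ∫ p in Icc (-r) (0 : ℝ), ‖φ p‖ ^ 2) / t)
      (nhdsWithin 0 (Ioi (0 : ℝ)))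
      (nhds (‖x‖ ^ 2 - ‖φ (-r)‖ ^ 2)) := by
  have hg : ContinuousOn (fun p => ‖φ p‖ ^ 2) (Icc (-r) 0) := hφ.norm.pow 2
  have havg := tendsto_inv_smul_integral_nhdsGT (neg_lt_zero.2 hr) hg
  refine ((tendsto_const_nhds (x := ‖x‖ ^ 2)).sub havg).congr' ?_
  filter_upwards [Ioo_mem_nhdsGT hr] with t ⟨ht0, htr⟩
  have hdiff := integral_shift_ite_sub_integral ht0.le (by linarith : -r + t ≤ 0)
    (hg.intervalIntegrable_of_Icc (by linarith)) (‖x‖ ^ 2)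
  simp only [integral_Icc_eq_integral_Ioc, ← integral_of_le (neg_nonpos.2 hr.le),
    apply_ite (‖·‖ ^ 2)]
  rw [hdiff, smul_eq_mul, smul_eq_mul]
  field_simp
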